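/- arXiv:1906.00103 — 6 statements merged into one kernel-verified Lean document; each statement's English description precedes it below -/
import Mathlib

section
/- For each n ≥ 1, the sum over all permutations σ of {1,...,n} of (1/2)^{(number of j in {2,...,n} that are not peaks)} equals the Euler number E_n. Equivalently, 2^{1-n} · Σ_{σ ∈ S_n} 2^{pk(σ)} = E_n. -/
open Finset

/-- The Euler numbers `E n`, defined as the Taylor coefficients (times `n!`)
of `tan x + sec x` at `0`, i.e. `E n = (d/dx)^n (tan x + sec x) |_{x=0}`. -/
noncomputable def eulerE (n : ℕ) : ℝ :=
  iteratedDeriv n (fun x : ℝ => Real.tan x + (Real.cos x)⁻¹) 0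

/-- The word `σ_1 ⋯ σ_n` extended by the boundary convention `σ_0 = σ_{n+1} = +∞`,
encoded with values in `{0, …, n-1}` and `n` playing the role of `+∞`. -/
def extWord (n : ℕ) (σ : Equiv.Perm (Fin n)) (j : ℕ) : ℕ :=
  if h : 1 ≤ j ∧ j - 1 < n then (σ ⟨j - 1, h.2⟩ : ℕ) else n

/-- number of peaks of `σ` (positions `j ∈ {1,…,n}` with `σ_{j-1} < σ_j > σ_{j+1}`). -/
def pk (n : ℕ) (σ : Equiv.Perm (Fin n)) : ℕ :=
  ((Finset.Icc 1 n).filter (fun j =>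
    extWord n σ (j-1) < extWord n σ j ∧ extWord n σ (j+1) < extWord n σ j)).card

/-- number of valleys of `σ` (positions `j ∈ {1,…,n}` with `σ_{j-1} > σ_j < σ_{j+1}`). -/
def valy (n : ℕ) (σ : Equiv.Perm (Fin n)) : ℕ :=
  ((Finset.Icc 1 n).filter (fun j =>
    extWord n σ j < extWord n σ (j-1) ∧ extWord n σ j < extWord n σ (j+1))).card

/-- number of double ascents of `σ` (positions `j ∈ {1,…,n}` with `σ_{j-1} < σ_j < σ_{j+1}`). -/
def da (n : ℕ) (σ : Equiv.Perm (Fin n)) : ℕ :=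
  ((Finset.Icc 1 n).filter (fun j =>
    extWord n σ (j-1) < extWord n σ j ∧ extWord n σ j < extWord n σ (j+1))).card

/-- number of peaks among positions `j ∈ {2,…,n}`. -/
def pk2 (n : ℕ) (σ : Equiv.Perm (Fin n)) : ℕ :=
  ((Finset.Icc 2 n).filter (fun j =>
    extWord n σ (j-1) < extWord n σ j ∧ extWord n σ (j+1) < extWord n σ j)).card

/-- number of double ascents among positions `j ∈ {2,…,n}`. -/
def da2 (n : ℕ) (σ : Equiv.Perm (Fin n)) : ℕ :=
  ((Finset.Icc 2 n).filter (fun j =>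
    extWord n σ (j-1) < extWord n σ j ∧ extWord n σ j < extWord n σ (j+1))).card

/-- number of ascents of `σ` among positions `1,…,n-1` (`σ_j < σ_{j+1}`). -/
def asc (n : ℕ) (σ : Equiv.Perm (Fin n)) : ℕ :=
  ((Finset.Icc 1 (n-1)).filter (fun j => extWord n σ j < extWord n σ (j+1))).card

/-- number of descents of `σ` among positions `1,…,n-1` (`σ_j > σ_{j+1}`). -/
def des (n : ℕ) (σ : Equiv.Perm (Fin n)) : ℕ :=
  ((Finset.Icc 1 (n-1)).filter (fun j => extWord n σ (j+1) < extWord n σ j)).card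

/-!
Deleting the largest letter of `σ ∈ S_{n+1}` leaves `σ' ∈ S_n`; conversely `σ` is `σ'` with the
new maximum put into one of its `n + 1` slots. In an end slot it creates no peak; in one of the
`2 pk σ'` slots beside a peak it becomes a peak in place of that one; in each of the other
`n - 1 - 2 pk σ'` slots it adds a peak. Hence `C_n = ∑_σ (1 + x²)^(pk σ + 1) x^(n - 1 - 2 pk σ)`
satisfies `C_1 = 1 + x²` and `C_{n+1} = (1 + x²) C_n'`. Since `f = tan + sec` satisfies
`2 f' = 1 + f²`, its derivatives are `f⁽ᵏ⁾ = P_k(f) / 2^k` with `P_0 = x`,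
`P_{k+1} = (1 + x²) P_k'`. So `C_n = P_n` for `n ≥ 1` and, as `f 0 = 1`,
`∑_σ 2^(pk σ + 1) = C_n(1) = 2^n E_n`.
-/

open Polynomial Real

noncomputable def tanSecPoly : ℕ → ℝ[X]
  | 0 => X
  | k + 1 => (1 + X ^ 2) * derivative (tanSecPoly k)

lemma hasDerivAt_tan_add_inv_cos {x : ℝ} (hx : cos x ≠ 0) :
    HasDerivAt (fun y => tan y + (cos y)⁻¹) ((1 + (tan x + (cos x)⁻¹) ^ 2) / 2) x := by
  refine ((hasDerivAt_tan hx).add ((hasDerivAt_cos x).inv hx)).congr_deriv ?_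
  rw [tan_eq_sin_div_cos]
  field_simp
  linear_combination -sin_sq_add_cos_sq x

lemma iteratedDeriv_tan_add_inv_cos (k : ℕ) {x : ℝ} (hx : cos x ≠ 0) :
    iteratedDeriv k (fun y => tan y + (cos y)⁻¹) x
      = (tanSecPoly k).eval (tan x + (cos x)⁻¹) / 2 ^ k := by
  induction k generalizing x with
  | zero => simp [tanSecPoly]
  | succ k ih =>
    have hopen : IsOpen {y : ℝ | cos y ≠ 0} := isOpen_ne_fun continuous_cos continuous_const
    rw [iteratedDeriv_succ, (Filter.eventuallyEq_of_mem (hopen.mem_nhds hx)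
      fun y hy => ih hy).deriv_eq]
    refine ((((tanSecPoly k).hasDerivAt _).comp x
      (hasDerivAt_tan_add_inv_cos hx)).div_const (2 ^ k)).deriv.trans ?_
    simp only [tanSecPoly, eval_mul, eval_add, eval_one, eval_pow, eval_X, pow_succ]
    ring

lemma eulerE_eq_eval_tanSecPoly (n : ℕ) : eulerE n = (tanSecPoly n).eval 1 / 2 ^ n := by
  simp [eulerE, iteratedDeriv_tan_add_inv_cos n (x := 0) (by simp)]

def IsPeak (w : ℕ → ℕ) (j : ℕ) : Prop := w (j - 1) < w j ∧ w (j + 1) < w j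

instance (w : ℕ → ℕ) : DecidablePred (IsPeak w) := fun _ => inferInstanceAs (Decidable (_ ∧ _))

def peaks (w : ℕ → ℕ) (N : ℕ) : Finset ℕ := (Icc 1 N).filter (IsPeak w)

section peaks
variable {w : ℕ → ℕ} {N j : ℕ}

lemma IsPeak.not_succ (h : IsPeak w j) : ¬ IsPeak w (j + 1) := fun h' =>
  lt_asymm h.2 (by simpa only [Nat.add_sub_cancel] using h'.1)

lemma succ_notMem_peaks (hj : j ∈ peaks w N) : j + 1 ∉ peaks w N :=
  fun hj' => (mem_filter.1 hj).2.not_succ (mem_filter.1 hj').2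

lemma StrictMono.isPeak_comp_iff {g : ℕ → ℕ} (hg : StrictMono g) :
    IsPeak (g ∘ w) j ↔ IsPeak w j := by
  simp [IsPeak, hg.lt_iff_lt]

lemma StrictMono.peaks_comp {g : ℕ → ℕ} (hg : StrictMono g) : peaks (g ∘ w) N = peaks w N :=
  filter_congr fun _ _ => hg.isPeak_comp_iff

lemma peaks_subset_Icc {m : ℕ} (hin : ∀ j ∈ Icc 1 N, w j < m) (h0 : m ≤ w 0)
    (hN : m ≤ w (N + 1)) : peaks w N ⊆ Icc 2 (N - 1) := by
  intro j hj
  obtain ⟨hj, hlt, hgt⟩ := mem_filter.1 hj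
  have hwj := hin j hj
  rw [mem_Icc] at hj ⊢
  constructor
  · by_contra h
    obtain rfl : j = 1 := by omega
    exact lt_asymm hlt (hwj.trans_le h0)
  · by_contra h
    obtain rfl : j = N := by omega
    exact lt_asymm hgt (hwj.trans_le hN)

end peaks

def insertAt (w : ℕ → ℕ) (p m : ℕ) (j : ℕ) : ℕ :=
  if j ≤ p then w j else if j = p + 1 then m else w (j - 1)

section insertAt
variable {w : ℕ → ℕ} {N m p j : ℕ}

lemma insertAt_of_le (h : j ≤ p) : insertAt w p m j = w j := if_pos h

lemma insertAt_succ : insertAt w p m (p + 1) = m := by simp [insertAt]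

lemma insertAt_of_gt (h : p + 1 < j) : insertAt w p m j = w (j - 1) := by
  simp [insertAt, show ¬ j ≤ p by omega, show j ≠ p + 1 by omega]

lemma isPeak_insertAt_of_lt (h : j < p) : IsPeak (insertAt w p m) j ↔ IsPeak w j := by
  rw [IsPeak, IsPeak, insertAt_of_le (by omega), insertAt_of_le h.le, insertAt_of_le h]

lemma isPeak_insertAt_of_gt (h : p + 2 < j) :
    IsPeak (insertAt w p m) j ↔ IsPeak w (j - 1) := by
  rw [IsPeak, IsPeak, insertAt_of_gt (by omega), insertAt_of_gt (by omega),
    insertAt_of_gt (by omega), Nat.add_sub_cancel, Nat.sub_add_cancel (by omega)]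

lemma not_isPeak_insertAt_self (hin : ∀ j ∈ Icc 1 N, w j < m) (hp : p ∈ Icc 1 N) :
    ¬ IsPeak (insertAt w p m) p := fun h =>
  lt_asymm (hin p hp) (by simpa only [insertAt_succ, insertAt_of_le le_rfl] using h.2)

lemma not_isPeak_insertAt_add_two (hin : ∀ j ∈ Icc 1 N, w j < m) (hp : p < N) :
    ¬ IsPeak (insertAt w p m) (p + 2) := fun h =>
  lt_asymm (hin (p + 1) (mem_Icc.2 ⟨by omega, hp⟩))
    (by simpa only [Nat.add_sub_cancel, show p + 2 - 1 = p + 1 from rfl, insertAt_succ,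
      insertAt_of_gt (show p + 1 < p + 2 by omega)] using h.1)

lemma isPeak_insertAt_succ_iff (hin : ∀ j ∈ Icc 1 N, w j < m) (h0 : m < w 0)
    (hN : m < w (N + 1)) (hp : p ≤ N) :
    IsPeak (insertAt w p m) (p + 1) ↔ 1 ≤ p ∧ p < N := by
  rw [IsPeak, Nat.add_sub_cancel, insertAt_of_le le_rfl, insertAt_succ,
    insertAt_of_gt (by omega), Nat.add_sub_cancel]
  refine ⟨fun ⟨h1, h2⟩ => ⟨Nat.pos_of_ne_zero ?_, lt_of_le_of_ne hp ?_⟩,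
    fun ⟨h1, h2⟩ => ⟨hin p (mem_Icc.2 ⟨h1, hp⟩), hin (p + 1) (mem_Icc.2 ⟨by omega, h2⟩)⟩⟩
  · rintro rfl; exact lt_asymm h1 h0
  · rintro rfl; exact lt_asymm h2 hN

lemma card_erase_peaks_insertAt (hin : ∀ j ∈ Icc 1 N, w j < m) (hp : p ≤ N) :
    #((peaks (insertAt w p m) (N + 1)).erase (p + 1))
      = #(((peaks w N).erase p).erase (p + 1)) := by
  have hself := not_isPeak_insertAt_self hin (p := p)
  refine card_nbij' (fun j => if j < p then j else j - 1) (fun q => if q < p then q else q + 1)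
    ?_ ?_ ?_ ?_ <;> intro j hj <;>
    simp only [peaks, mem_coe, mem_erase, mem_filter, mem_Icc] at hj ⊢
  · obtain ⟨hjp, ⟨hj1, hjN⟩, hpk⟩ := hj
    rcases lt_trichotomy j p with hlt | rfl | hgt
    · rw [if_pos hlt]
      exact ⟨by omega, by omega, ⟨hj1, by omega⟩, (isPeak_insertAt_of_lt hlt).1 hpk⟩
    · exact absurd hpk (hself (mem_Icc.2 ⟨hj1, hp⟩))
    · obtain rfl | hgt' : j = p + 2 ∨ p + 2 < j := by omega
      · exact absurd hpk (not_isPeak_insertAt_add_two hin (by omega))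
      rw [if_neg (by omega)]
      exact ⟨by omega, by omega, ⟨by omega, by omega⟩, (isPeak_insertAt_of_gt hgt').1 hpk⟩
  · obtain ⟨hjp1, hjp, ⟨hj1, hjN⟩, hpk⟩ := hj
    by_cases hlt : j < p
    · rw [if_pos hlt]
      exact ⟨by omega, ⟨hj1, by omega⟩, (isPeak_insertAt_of_lt hlt).2 hpk⟩
    · rw [if_neg hlt]
      exact ⟨by omega, ⟨by omega, by omega⟩, (isPeak_insertAt_of_gt (by omega)).2 hpk⟩
  · obtain ⟨hjp, ⟨hj1, hjN⟩, hpk⟩ := hj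
    have hjp' : j ≠ p := by rintro rfl; exact hself (mem_Icc.2 ⟨hj1, hp⟩) hpk
    split_ifs <;> omega
  · split_ifs <;> omega

end insertAt

/-- `p` stands for the slot between positions `p` and `p + 1`. -/
def peakFreeGaps (S : Finset ℕ) (N : ℕ) : Finset ℕ :=
  (Icc 1 (N - 1)).filter (fun p => p ∉ S ∧ p + 1 ∉ S)

lemma card_peakFreeGaps_add {S : Finset ℕ} {N : ℕ} (hS : S ⊆ Icc 2 (N - 1))
    (hadj : ∀ q ∈ S, q + 1 ∉ S) : #(peakFreeGaps S N) + 2 * #S = N - 1 := by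
  have hleft : (Icc 1 (N - 1)).filter (· ∈ S) = S := by
    rw [filter_mem_eq_inter, inter_eq_right]
    exact hS.trans (Icc_subset_Icc_left (by norm_num))
  have hright : #((Icc 1 (N - 1)).filter (· + 1 ∈ S)) = #S := by
    refine card_nbij' (· + 1) (· - 1) ?_ ?_ ?_ ?_ <;> intro q hq <;>
      simp only [mem_coe, mem_filter, mem_Icc] at hq ⊢
    · exact hq.2
    · have := mem_Icc.1 (hS hq)
      exact ⟨⟨by omega, by omega⟩, by rwa [Nat.sub_add_cancel (by omega)]⟩
    · omega
    · have := mem_Icc.1 (hS hq); omega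
  have hdisj : Disjoint ((Icc 1 (N - 1)).filter (· ∈ S)) ((Icc 1 (N - 1)).filter (· + 1 ∈ S)) :=
    disjoint_filter.2 fun q _ hq => hadj q hq
  have hsplit := card_filter_add_card_filter_not (s := Icc 1 (N - 1)) (fun p => p ∉ S ∧ p + 1 ∉ S)
  rw [Nat.card_Icc] at hsplit
  simp only [not_and_or, not_not, filter_or] at hsplit
  rw [card_union_of_disjoint hdisj, hleft, hright] at hsplit
  rw [peakFreeGaps]
  omega

lemma card_peaks_insertAt {w : ℕ → ℕ} {N m p : ℕ} (hin : ∀ j ∈ Icc 1 N, w j < m)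
    (h0 : m < w 0) (hN : m < w (N + 1)) (hp : p ≤ N) :
    #(peaks (insertAt w p m) (N + 1))
      = #(peaks w N) + if p ∈ peakFreeGaps (peaks w N) N then 1 else 0 := by
  set S := peaks w N
  set S' := peaks (insertAt w p m) (N + 1)
  have hshift : #(S'.erase (p + 1)) = #((S.erase p).erase (p + 1)) :=
    card_erase_peaks_insertAt hin hp
  have hnew : p + 1 ∈ S' ↔ 1 ≤ p ∧ p < N := by
    simp only [S', peaks, mem_filter, mem_Icc, isPeak_insertAt_succ_iff hin h0 hN hp]
    omega
  have hS : S ⊆ Icc 2 (N - 1) := peaks_subset_Icc hin h0.le hN.le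
  have hpos {T : Finset ℕ} {q : ℕ} (h : q ∈ T) : 0 < #T := card_pos.2 ⟨q, h⟩
  rw [card_erase_eq_ite, card_erase_eq_ite, card_erase_eq_ite] at hshift
  simp only [mem_erase, ne_eq, show p + 1 ≠ p by omega, not_false_eq_true, true_and] at hshift
  simp only [peakFreeGaps, mem_filter, mem_Icc]
  by_cases h1 : p ∈ S
  · have h1' := mem_Icc.1 (hS h1)
    have h3 := hnew.2 ⟨by omega, by omega⟩
    rw [if_pos h3, if_neg (succ_notMem_peaks h1), if_pos h1] at hshift
    rw [if_neg fun h => h.2.1 h1]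
    have := hpos h1; have := hpos h3; omega
  by_cases h2 : p + 1 ∈ S
  · have h2' := mem_Icc.1 (hS h2)
    have h3 := hnew.2 ⟨by omega, by omega⟩
    rw [if_pos h3, if_pos h2, if_neg h1] at hshift
    rw [if_neg fun h => h.2.2 h2]
    have := hpos h2; have := hpos h3; omega
  rw [if_neg h2, if_neg h1] at hshift
  by_cases hmid : 1 ≤ p ∧ p < N
  · rw [if_pos (hnew.2 hmid)] at hshift
    rw [if_pos ⟨⟨hmid.1, by omega⟩, h1, h2⟩]
    have := hpos (hnew.2 hmid); omega
  · rw [if_neg (mt hnew.1 hmid)] at hshift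
    rw [if_neg fun h => hmid ⟨h.1.1, by omega⟩]
    omega

section insertMax
variable {n : ℕ}

lemma injective_insertNth {α : Type*} {f : Fin n → α} (hf : Function.Injective f) {x : α}
    (hx : ∀ i, f i ≠ x) (p : Fin (n + 1)) :
    Function.Injective (p.insertNth (α := fun _ => α) x f) := by
  intro a b hab
  induction a using p.succAboveCases <;> induction b using p.succAboveCases <;>
    simp only [Fin.insertNth_apply_same, Fin.insertNth_apply_succAbove] at hab
  · rfl
  · exact absurd hab.symm (hx _)
  · exact absurd hab (hx _)
  · rw [hf hab]

noncomputable def insertMax (σ : Equiv.Perm (Fin n)) (p : Fin (n + 1)) :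
    Equiv.Perm (Fin (n + 1)) :=
  Equiv.ofBijective (p.insertNth (Fin.last n) (Fin.castSucc ∘ σ)) <|
    Finite.injective_iff_bijective.1 <|
      injective_insertNth ((Fin.castSucc_injective n).comp σ.injective)
        (fun i => Fin.castSucc_ne_last (σ i)) p

lemma insertMax_apply_self (σ : Equiv.Perm (Fin n)) (p : Fin (n + 1)) :
    insertMax σ p p = Fin.last n := by
  simp [insertMax]

lemma insertMax_apply_succAbove (σ : Equiv.Perm (Fin n)) (p : Fin (n + 1)) (i : Fin n) :
    insertMax σ p (p.succAbove i) = (σ i).castSucc := by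
  simp [insertMax]

lemma bijective_insertMax :
    Function.Bijective (fun x : Equiv.Perm (Fin n) × Fin (n + 1) => insertMax x.1 x.2) := by
  refine (Fintype.bijective_iff_injective_and_card _).2 ⟨?_, ?_⟩
  · rintro ⟨σ, p⟩ ⟨τ, q⟩ h
    have hval (i) : insertMax σ p i = insertMax τ q i := DFunLike.congr_fun h i
    obtain rfl : p = q := by
      by_contra hpq
      obtain ⟨i, rfl⟩ := Fin.exists_succAbove_eq hpq
      have := hval (q.succAbove i)
      rw [insertMax_apply_self, insertMax_apply_succAbove] at this
      exact Fin.castSucc_ne_last _ this.symm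
    have hστ : σ = τ := Equiv.ext fun i => Fin.castSucc_injective n <| by
      simpa only [insertMax_apply_succAbove] using hval (p.succAbove i)
    rw [hστ]
  · simp [Fintype.card_perm, Nat.factorial_succ, mul_comm]

lemma sum_perm_succ {M : Type*} [AddCommMonoid M] (f : Equiv.Perm (Fin (n + 1)) → M) :
    ∑ τ, f τ = ∑ σ, ∑ p, f (insertMax σ p) := by
  rw [← bijective_insertMax.sum_comp, Fintype.sum_prod_type]

end insertMax

def natSuccAbove (n x : ℕ) : ℕ := if x < n then x else x + 1

lemma strictMono_natSuccAbove (n : ℕ) : StrictMono (natSuccAbove n) := by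
  intro a b hab
  simp only [natSuccAbove]
  split_ifs <;> omega

section extWord
variable {n : ℕ} (σ : Equiv.Perm (Fin n))

lemma extWord_succ (i : Fin n) : extWord n σ (i + 1) = σ i := by
  simp [extWord]

lemma extWord_lt {j : ℕ} (hj : j ∈ Icc 1 n) : extWord n σ j < n := by
  obtain ⟨i, rfl⟩ : ∃ i : Fin n, (i : ℕ) + 1 = j := ⟨⟨j - 1, by grind⟩, by grind⟩
  rw [extWord_succ]
  exact (σ i).isLt

lemma extWord_of_notMem {j : ℕ} (hj : j ∉ Icc 1 n) : extWord n σ j = n := by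
  rw [mem_Icc] at hj
  exact dif_neg (by omega)

lemma pk_eq_card_peaks : pk n σ = #(peaks (extWord n σ) n) := rfl

lemma peaks_extWord_subset : peaks (extWord n σ) n ⊆ Icc 2 (n - 1) :=
  peaks_subset_Icc (fun _ hj => extWord_lt σ hj) (extWord_of_notMem σ (by simp)).ge
    (extWord_of_notMem σ (by simp)).ge

lemma card_peakFreeGaps_add_two_mul_pk :
    #(peakFreeGaps (peaks (extWord n σ) n) n) + 2 * pk n σ = n - 1 :=
  card_peakFreeGaps_add (peaks_extWord_subset σ) fun _ => succ_notMem_peaks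

/-- The boundary value `n` of `extWord n σ` has to become `n + 1`; `natSuccAbove n` does that
without changing any comparison. -/
lemma extWord_insertMax (p : Fin (n + 1)) :
    extWord (n + 1) (insertMax σ p) = insertAt (natSuccAbove n ∘ extWord n σ) p n := by
  funext j
  by_cases hj : j ∈ Icc 1 (n + 1)
  · obtain ⟨i, rfl⟩ : ∃ i : Fin (n + 1), (i : ℕ) + 1 = j := ⟨⟨j - 1, by grind⟩, by grind⟩
    rw [extWord_succ]
    induction i using p.succAboveCases with
    | x => rw [insertMax_apply_self, insertAt_succ, Fin.val_last]
    | p k =>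
      rw [insertMax_apply_succAbove, Fin.val_castSucc]
      rcases lt_or_ge k.castSucc p with hk | hk
      · rw [Fin.succAbove_of_castSucc_lt _ _ hk, Fin.val_castSucc,
          insertAt_of_le (show (k : ℕ) + 1 ≤ p from Fin.lt_def.1 hk), Function.comp_apply,
          extWord_succ]
        simp [natSuccAbove]
      · rw [Fin.succAbove_of_le_castSucc _ _ hk, Fin.val_succ,
          insertAt_of_gt (by simpa [Fin.le_def] using hk), Nat.add_sub_cancel,
          Function.comp_apply, extWord_succ]
        simp [natSuccAbove]
  · rw [extWord_of_notMem _ hj]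
    rw [mem_Icc] at hj
    obtain rfl | hj : j = 0 ∨ n + 2 ≤ j := by omega
    · rw [insertAt_of_le (Nat.zero_le _), Function.comp_apply, extWord_of_notMem σ (by simp)]
      simp [natSuccAbove]
    · rw [insertAt_of_gt (by omega), Function.comp_apply,
        extWord_of_notMem σ (by simp only [mem_Icc]; omega)]
      simp [natSuccAbove]

lemma pk_insertMax (p : Fin (n + 1)) :
    pk (n + 1) (insertMax σ p)
      = pk n σ + if (p : ℕ) ∈ peakFreeGaps (peaks (extWord n σ) n) n then 1 else 0 := by
  have hin : ∀ j ∈ Icc 1 n, (natSuccAbove n ∘ extWord n σ) j < n := fun j hj => by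
    simp [natSuccAbove, extWord_lt σ hj]
  have hbd {j : ℕ} (hj : j ∉ Icc 1 n) : n < (natSuccAbove n ∘ extWord n σ) j := by
    simp [natSuccAbove, extWord_of_notMem σ hj]
  rw [pk_eq_card_peaks, pk_eq_card_peaks, extWord_insertMax,
    card_peaks_insertAt hin (hbd (by simp)) (hbd (by simp)) (by omega),
    (strictMono_natSuccAbove n).peaks_comp]

lemma card_filter_not_isPeak :
    #((Icc 2 n).filter fun j => ¬ IsPeak (extWord n σ) j) = n - 1 - pk n σ := by
  have hpeaks : (Icc 2 n).filter (IsPeak (extWord n σ)) = peaks (extWord n σ) n :=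
    (filter_subset_filter _ (Icc_subset_Icc_left one_le_two)).antisymm fun j hj =>
      mem_filter.2 ⟨Icc_subset_Icc_right (n.sub_le 1) (peaks_extWord_subset σ hj),
        (mem_filter.1 hj).2⟩
  have := card_filter_add_card_filter_not (s := Icc 2 n) (IsPeak (extWord n σ))
  rw [hpeaks, ← pk_eq_card_peaks, Nat.card_Icc] at this
  omega

end extWord

lemma sum_apply_add_ite_mem {M : Type*} [AddCommMonoid M] (f : ℕ → M) (k : ℕ)
    {s t : Finset ℕ} (hts : t ⊆ s) :
    ∑ p ∈ s, f (k + if p ∈ t then 1 else 0) = (#s - #t) • f k + #t • f (k + 1) := by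
  simp only [apply_ite, add_zero, sum_ite, sum_const, filter_mem_eq_inter, inter_eq_right.2 hts,
    filter_not, card_sdiff_of_subset hts]
  exact add_comm _ _

lemma one_add_X_sq_mul_derivative {R : Type*} [CommRing R] (k m : ℕ) :
    (1 + X ^ 2) * derivative ((1 + X ^ 2 : R[X]) ^ (k + 1) * X ^ m)
      = (2 * k + 2) • ((1 + X ^ 2) ^ (k + 1) * X ^ (m + 1))
        + m • ((1 + X ^ 2) ^ (k + 2) * X ^ (m - 1)) := by
  rcases m with _ | m <;>
    simp only [derivative_mul, derivative_pow, derivative_add, derivative_one, derivative_X,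
      C_eq_natCast, nsmul_eq_mul] <;> push_cast <;> ring

noncomputable def peakPoly (n : ℕ) : ℝ[X] :=
  ∑ σ : Equiv.Perm (Fin n), (1 + X ^ 2) ^ (pk n σ + 1) * X ^ (n - 1 - 2 * pk n σ)

section peakPoly
variable {n : ℕ}

lemma peakPoly_succ (hn : 1 ≤ n) : peakPoly (n + 1) = (1 + X ^ 2) * derivative (peakPoly n) := by
  rw [peakPoly, sum_perm_succ, peakPoly, derivative_sum, mul_sum]
  refine sum_congr rfl fun σ _ => ?_
  set G := peakFreeGaps (peaks (extWord n σ) n) n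
  have hG : G ⊆ range (n + 1) := fun p hp => by
    simp only [G, peakFreeGaps, mem_filter, mem_Icc] at hp
    simp only [mem_range]
    omega
  have hcard : #G + 2 * pk n σ = n - 1 := card_peakFreeGaps_add_two_mul_pk σ
  simp only [pk_insertMax]
  let f (j : ℕ) : ℝ[X] := (1 + X ^ 2) ^ (j + 1) * X ^ (n + 1 - 1 - 2 * j)
  rw [Fin.sum_univ_eq_sum_range (fun p => f (pk n σ + if p ∈ G then 1 else 0)),
    sum_apply_add_ite_mem f (pk n σ) hG, card_range, one_add_X_sq_mul_derivative,
    show n + 1 - #G = 2 * pk n σ + 2 by omega, show #G = n - 1 - 2 * pk n σ by omega]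
  simp only [f, show n + 1 - 1 - 2 * pk n σ = n - 1 - 2 * pk n σ + 1 by omega,
    show n + 1 - 1 - 2 * (pk n σ + 1) = n - 1 - 2 * pk n σ - 1 by omega]

lemma pk_one (σ : Equiv.Perm (Fin 1)) : pk 1 σ = 0 := by
  have := card_peakFreeGaps_add_two_mul_pk σ
  omega

lemma peakPoly_eq_tanSecPoly (hn : 1 ≤ n) : peakPoly n = tanSecPoly n := by
  induction n, hn using Nat.le_induction with
  | base => simp [peakPoly, pk_one, tanSecPoly]
  | succ n hn ih => rw [peakPoly_succ hn, ih, tanSecPoly]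

lemma eval_one_peakPoly :
    (peakPoly n).eval 1 = ∑ σ : Equiv.Perm (Fin n), (2 : ℝ) ^ (pk n σ + 1) := by
  simp only [peakPoly, eval_finsetSum, eval_mul, eval_pow, eval_add, eval_one, eval_X, one_pow]
  norm_num

end peakPoly

theorem sum_W3_eq_euler (n : ℕ) (hn : 1 ≤ n) :
    ∑ σ : Equiv.Perm (Fin n),
      (1/2 : ℝ) ^ (((Finset.Icc 2 n).filter (fun j =>
        ¬ (extWord n σ (j-1) < extWord n σ j ∧
            extWord n σ (j+1) < extWord n σ j))).card)
      = eulerE n := by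
  have hpk (σ : Equiv.Perm (Fin n)) : pk n σ + 1 ≤ n := by
    have := card_peakFreeGaps_add_two_mul_pk σ
    omega
  calc _ = ∑ σ : Equiv.Perm (Fin n), (2 : ℝ) ^ (pk n σ + 1) / 2 ^ n := by
        refine sum_congr rfl fun σ _ => ?_
        erw [card_filter_not_isPeak]
        have hsplit : (2 : ℝ) ^ n = 2 ^ (n - 1 - pk n σ) * 2 ^ (pk n σ + 1) := by
          rw [← pow_add]; congr 1; have := hpk σ; omega
        rw [hsplit, one_div_pow]
        field_simp
    _ = (tanSecPoly n).eval 1 / 2 ^ n := by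
        rw [← sum_div, ← eval_one_peakPoly, peakPoly_eq_tanSecPoly hn]
    _ = eulerE n := (eulerE_eq_eval_tanSecPoly n).symm
end

section
/- The Hankel determinants of the sequence (E_0, 0, E_2, 0, E_4, 0, ...) of interleaved secant numbers are H_n = Π_{k=1}^{n−1} (k!)². -/
/-!
Let `D_a P = a X P + (1 + X²) P'`, so that `(sec^a x · P(tan x))' = sec^a x · (D_a P)(tan x)`.
Then the `n`-th derivative of `tan + sec` is `sec · S_n(tan) + T_n(tan)` with `S_n = D_1ⁿ 1` and
`T_n = D_0ⁿ X`. Since `D_a` flips parity, `T_n(0) = 0` for even `n` and `S_n(0) = 0` for odd `n`,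
so the Hankel entries are `S_{i+j}(0)`.

On coefficient vectors `D_1` acts as the symmetric tridiagonal matrix with off-diagonal entries
`1, 2, 3, …`. Hence `∑_k [X^k] S_i · [X^k] S_j = ⟨D_1ⁱ 1, D_1ʲ 1⟩ = [X^0] S_{i+j}`, i.e. the
Hankel matrix is `L Lᵀ` with `L_{ik} = [X^k] S_i`, which is lower triangular with diagonal `i!`.
-/

open Finset

open Polynomial Real
open scoped Nat Matrix

noncomputable def secTanDeriv (a : ℕ) (P : ℝ[X]) : ℝ[X] :=
  (a : ℝ[X]) * X * P + (1 + X ^ 2) * derivative P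

lemma hasDerivAt_tan_one_add_sq {x : ℝ} (hx : cos x ≠ 0) :
    HasDerivAt tan (1 + tan x ^ 2) x := by
  simpa [← inv_one_add_tan_sq hx] using hasDerivAt_tan hx

lemma hasDerivAt_inv_cos {x : ℝ} (hx : cos x ≠ 0) :
    HasDerivAt (fun y => (cos y)⁻¹) ((cos x)⁻¹ * tan x) x := by
  refine ((hasDerivAt_cos x).inv hx).congr_deriv ?_
  rw [tan_eq_sin_div_cos]
  field_simp

lemma hasDerivAt_inv_cos_pow_mul_eval_tan (a : ℕ) (P : ℝ[X]) {x : ℝ} (hx : cos x ≠ 0) :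
    HasDerivAt (fun y => (cos y)⁻¹ ^ a * P.eval (tan y))
      ((cos x)⁻¹ ^ a * (secTanDeriv a P).eval (tan x)) x := by
  refine (((hasDerivAt_inv_cos hx).pow a).mul
    ((P.hasDerivAt (tan x)).comp x (hasDerivAt_tan_one_add_sq hx))).congr_deriv ?_
  simp only [secTanDeriv, eval_add, eval_mul, eval_natCast, eval_X, eval_one, eval_pow,
    Function.comp_apply, Pi.pow_apply]
  cases a with
  | zero => simp only [pow_zero]; ring
  | succ a => push_cast; ring

lemma iteratedDeriv_inv_cos_mul_eval_tan_add_eval_tan (n : ℕ) (P Q : ℝ[X]) {x : ℝ}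
    (hx : cos x ≠ 0) :
    iteratedDeriv n (fun y => (cos y)⁻¹ * P.eval (tan y) + Q.eval (tan y)) x
      = (cos x)⁻¹ * ((secTanDeriv 1)^[n] P).eval (tan x)
        + ((secTanDeriv 0)^[n] Q).eval (tan x) := by
  induction n generalizing P Q with
  | zero => simp
  | succ n ih =>
    have hderiv : deriv (fun y => (cos y)⁻¹ * P.eval (tan y) + Q.eval (tan y))
        =ᶠ[nhds x] fun y => (cos y)⁻¹ * (secTanDeriv 1 P).eval (tan y)
          + (secTanDeriv 0 Q).eval (tan y) := by
      filter_upwards [continuous_cos.continuousAt.eventually_ne hx] with y hy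
      simpa using ((hasDerivAt_inv_cos_pow_mul_eval_tan 1 P hy).fun_add
        (hasDerivAt_inv_cos_pow_mul_eval_tan 0 Q hy)).deriv
    rw [iteratedDeriv_succ', hderiv.iteratedDeriv_eq, ih]
    rfl

lemma secTanDeriv_comp_neg_X (a e : ℕ) {P : ℝ[X]} (h : P.comp (-X) = (-1) ^ e * P) :
    (secTanDeriv a P).comp (-X) = (-1) ^ (e + 1) * secTanDeriv a P := by
  have hP' : (derivative P).comp (-X) = -(-1) ^ e * derivative P := by
    have := congrArg derivative h
    simp only [derivative_comp, derivative_neg, derivative_X, derivative_mul,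
      derivative_pow, derivative_neg, derivative_one] at this
    linear_combination -this
  simp only [secTanDeriv, add_comp, mul_comp, natCast_comp, X_comp, one_comp, pow_comp, h, hP']
  ring

lemma iterate_secTanDeriv_comp_neg_X (a n e : ℕ) {P : ℝ[X]} (h : P.comp (-X) = (-1) ^ e * P) :
    ((secTanDeriv a)^[n] P).comp (-X) = (-1) ^ (e + n) * (secTanDeriv a)^[n] P := by
  induction n with
  | zero => simpa using h
  | succ n ih => rw [Function.iterate_succ_apply', secTanDeriv_comp_neg_X a _ ih, add_assoc]

lemma eval_zero_eq_zero_of_comp_neg_X {P : ℝ[X]} (h : P.comp (-X) = -P) : P.eval 0 = 0 := by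
  have := congrArg (eval 0) h
  simp only [eval_comp, eval_neg, eval_X, neg_zero] at this
  linarith

lemma coeff_secTanDeriv_one (P : ℝ[X]) (k : ℕ) :
    (secTanDeriv 1 P).coeff k = (k + 1) * P.coeff (k + 1) + k * P.coeff (k - 1) := by
  rcases k with _ | _ | k <;>
    simp only [secTanDeriv, Nat.cast_one, one_mul, add_mul, coeff_add, mul_coeff_zero, coeff_X_zero,
      coeff_X_mul, coeff_X_pow_mul', coeff_derivative, coeff_X_pow, Nat.cast_add, zero_mul, zero_add,
      add_zero, mul_one, CharP.cast_eq_zero, OfNat.zero_ne_ofNat, Nat.not_ofNat_le_one,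
      le_add_iff_nonneg_left, zero_le, ↓reduceIte, zero_tsub, tsub_self, Nat.reduceSubDiff,
      add_tsub_cancel_right, Nat.reduceAdd] <;>
    ring

noncomputable def secPoly (n : ℕ) : ℝ[X] := (secTanDeriv 1)^[n] 1

lemma secPoly_succ (n : ℕ) : secPoly (n + 1) = secTanDeriv 1 (secPoly n) :=
  Function.iterate_succ_apply' _ _ _

lemma secPoly_coeff_eq_zero_of_lt {n k : ℕ} (h : n < k) : (secPoly n).coeff k = 0 := by
  induction n generalizing k with
  | zero => simp [secPoly, coeff_one, h.ne']
  | succ n ih =>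
    rw [secPoly_succ, coeff_secTanDeriv_one, ih (by omega), ih (by omega)]
    ring

lemma secPoly_coeff_self (n : ℕ) : (secPoly n).coeff n = n ! := by
  induction n with
  | zero => simp [secPoly]
  | succ n ih =>
    rw [secPoly_succ, coeff_secTanDeriv_one, secPoly_coeff_eq_zero_of_lt (by omega),
      Nat.add_sub_cancel, ih, Nat.factorial_succ]
    push_cast
    ring

lemma sum_coeff_secTanDeriv_one_mul_comm {P : ℝ[X]} (Q : ℝ[X]) {M : ℕ} (hM : P.coeff M = 0)
    (hM' : P.coeff (M + 1) = 0) :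
    ∑ k ∈ range (M + 1), (secTanDeriv 1 P).coeff k * Q.coeff k
      = ∑ k ∈ range (M + 1), P.coeff k * (secTanDeriv 1 Q).coeff k := by
  -- Truncating at `M + 1` leaves only the boundary term `(M + 1) (P_{M+1} Q_M - P_M Q_{M+1})`.
  have hL : ∀ k, (secTanDeriv 1 P).coeff k * Q.coeff k
      = (k + 1) * P.coeff (k + 1) * Q.coeff k + k * P.coeff (k - 1) * Q.coeff k := by
    intro k; rw [coeff_secTanDeriv_one]; ring
  have hR : ∀ k, P.coeff k * (secTanDeriv 1 Q).coeff k
      = (k + 1) * P.coeff k * Q.coeff (k + 1) + k * P.coeff k * Q.coeff (k - 1) := by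
    intro k; rw [coeff_secTanDeriv_one]; ring
  simp only [hL, hR, sum_add_distrib]
  rw [sum_range_succ, sum_range_succ' (fun k => (k : ℝ) * P.coeff (k - 1) * Q.coeff k),
    sum_range_succ, sum_range_succ' (fun k => (k : ℝ) * P.coeff k * Q.coeff (k - 1)), hM, hM']
  simp only [Nat.add_sub_cancel]
  push_cast
  ring

lemma sum_secPoly_coeff_mul {a N : ℕ} (b : ℕ) (h : a < N) :
    ∑ k ∈ range N, (secPoly a).coeff k * (secPoly b).coeff k = (secPoly (a + b)).coeff 0 := by
  induction a generalizing b with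
  | zero =>
    rw [sum_eq_single_of_mem 0 (mem_range.2 h) (fun k _ hk => by simp [secPoly, coeff_one, hk])]
    simp [secPoly]
  | succ a ih =>
    obtain ⟨M, rfl⟩ : ∃ M, N = M + 1 := ⟨N - 1, by omega⟩
    rw [secPoly_succ, sum_coeff_secTanDeriv_one_mul_comm _ (secPoly_coeff_eq_zero_of_lt (by omega))
      (secPoly_coeff_eq_zero_of_lt (by omega)), ← secPoly_succ, ih _ (by omega),
      Nat.add_right_comm, Nat.add_assoc]

lemma eulerE_eq_eval_zero (n : ℕ) :
    eulerE n = (secPoly n).eval 0 + ((secTanDeriv 0)^[n] X).eval 0 := by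
  have hf : (fun x : ℝ => tan x + (cos x)⁻¹)
      = fun x => (cos x)⁻¹ * eval (tan x) 1 + eval (tan x) X := by
    funext x
    simp [add_comm]
  rw [eulerE, hf, iteratedDeriv_inv_cos_mul_eval_tan_add_eval_tan n 1 X (by simp)]
  simp [secPoly]

lemma eulerE_eq_secPoly_coeff_zero {n : ℕ} (hn : Even n) : eulerE n = (secPoly n).coeff 0 := by
  have hodd : ((secTanDeriv 0)^[n] X).comp (-X) = -(secTanDeriv 0)^[n] X := by
    rw [iterate_secTanDeriv_comp_neg_X 0 n 1 (by simp), add_comm, pow_succ, hn.neg_one_pow]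
    ring
  rw [eulerE_eq_eval_zero, eval_zero_eq_zero_of_comp_neg_X hodd, add_zero, coeff_zero_eq_eval_zero]

lemma secPoly_coeff_zero_of_odd {n : ℕ} (hn : Odd n) : (secPoly n).coeff 0 = 0 := by
  have hodd : (secPoly n).comp (-X) = -secPoly n := by
    rw [secPoly, iterate_secTanDeriv_comp_neg_X 1 n 0 (by simp), zero_add, hn.neg_one_pow]
    ring
  rw [coeff_zero_eq_eval_zero, eval_zero_eq_zero_of_comp_neg_X hodd]

noncomputable def secPolyMatrix (n : ℕ) : Matrix (Fin n) (Fin n) ℝ :=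
  .of fun i k => (secPoly i).coeff k

lemma hankel_eq_secPolyMatrix_mul_transpose (n : ℕ) :
    (fun i j : Fin n => if Even ((i : ℕ) + (j : ℕ)) then eulerE ((i : ℕ) + (j : ℕ)) else 0 :
      Matrix (Fin n) (Fin n) ℝ)
      = secPolyMatrix n * (secPolyMatrix n)ᵀ := by
  ext i j
  simp only [secPolyMatrix, Matrix.of_apply, Matrix.mul_apply, Matrix.transpose_apply]
  rw [Fin.sum_univ_eq_sum_range (fun k => (secPoly i).coeff k * (secPoly j).coeff k),
    sum_secPoly_coeff_mul _ i.isLt]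
  split_ifs with h
  · exact eulerE_eq_secPoly_coeff_zero h
  · exact (secPoly_coeff_zero_of_odd (Nat.not_even_iff_odd.1 h)).symm

lemma det_secPolyMatrix (n : ℕ) :
    (secPolyMatrix n).det = ∏ i : Fin n, ((i : ℕ) ! : ℝ) := by
  refine (Matrix.det_of_isLowerTriangular _ fun i k hik => ?_).trans ?_
  · exact secPoly_coeff_eq_zero_of_lt hik
  · simp [secPolyMatrix, secPoly_coeff_self]

theorem hankel_interleaved_secant (n : ℕ) :
    Matrix.det (fun i j : Fin n =>
        if Even ((i : ℕ) + (j : ℕ)) then eulerE ((i : ℕ) + (j : ℕ)) else 0)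
      = ∏ k ∈ Finset.Icc 1 (n-1), (Nat.factorial (k) : ℝ)^2 := by
  rw [hankel_eq_secPolyMatrix_mul_transpose, Matrix.det_mul, Matrix.det_transpose,
    det_secPolyMatrix, ← sq, ← prod_pow, Fin.prod_univ_eq_prod_range (fun k => (k ! : ℝ) ^ 2)]
  refine (prod_subset (fun k hk => ?_) fun k hk hk' => ?_).symm
  · simp only [mem_Icc, mem_range] at hk ⊢
    omega
  · obtain rfl : k = 0 := by simp only [mem_Icc, mem_range] at hk hk'; omega
    simp
end

section
/- The Hankel determinants of the sequence (E_2, E_4, E_6, ...) are H_n = Π_{k=1}^{n−1} ((2k+1)!)². -/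
/-! Let `S(n, m)` be the `m`-th derivative at `0` of `n! tanⁿ sec`. Since
`(n! tanⁿ sec)' = (n+1)! tanⁿ⁺¹ sec + n² (n-1)! tanⁿ⁻¹ sec`, the table obeys
`S(n, m+1) = S(n+1, m) + n² S(n-1, m)` with `S(n, 0) = δₙ₀`, and `E_{2m} = S(0, 2m)` because
`tan` is odd. For the moment functional `L(Xᵏ) = S(0, k)` the monic polynomials
`q_{n+2} = X q_{n+1} - (n+1)² q_n` satisfy `L(Xᵐ qₙ) = S(n, m)`, which vanishes for `m < n` and
equals `(n!)²` for `m = n`. The `q_{2i+1}` are odd, so multiplying the Hankel matrix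
`(S(0, 2i+2j+2))` on the left by the unitriangular matrix of their odd coefficients gives the
upper triangular matrix `(S(2i+1, 2j+1))`, with diagonal `((2i+1)!)²`. -/

open Finset

open Polynomial Nat

theorem sum_range_two_mul_eq_sum_odd {M : Type*} [AddCommMonoid M] {f : ℕ → M}
    (hf : ∀ k, Even k → f k = 0) (N : ℕ) :
    ∑ k ∈ range (2 * N), f k = ∑ l ∈ range N, f (2 * l + 1) := by
  induction N with
  | zero => rfl
  | succ N ih =>
    rw [mul_add_one, sum_range_succ, sum_range_succ, sum_range_succ, ih,
      hf (2 * N) (even_two_mul N), add_zero]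

section DyckTable

variable {R : Type*} [CommRing R] (w : ℕ → R)

/-- Weighted count of paths of length `m` from height `n` down to `0` with unit steps, a down-step
from height `h` weighing `w h`. -/
def dyckTable : ℕ → ℕ → R
  | 0, 0 => 1
  | _ + 1, 0 => 0
  | 0, m + 1 => dyckTable 1 m
  | n + 1, m + 1 => dyckTable (n + 2) m + w (n + 1) * dyckTable n m

theorem dyckTable_eq_zero_of_lt {n m : ℕ} (h : m < n) : dyckTable w n m = 0 := by
  induction m generalizing n with
  | zero => obtain ⟨n, rfl⟩ := Nat.exists_eq_add_one_of_ne_zero h.ne'; rfl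
  | succ m ih =>
    obtain ⟨n, rfl⟩ := Nat.exists_eq_add_one_of_ne_zero (by omega : n ≠ 0)
    rw [dyckTable, ih (by omega), ih (by omega), mul_zero, add_zero]

theorem dyckTable_self (n : ℕ) : dyckTable w n n = ∏ k ∈ range n, w (k + 1) := by
  induction n with
  | zero => rfl
  | succ n ih =>
    rw [dyckTable, dyckTable_eq_zero_of_lt w (by omega), ih, prod_range_succ, zero_add, mul_comm]

theorem dyckTable_sq_self (n : ℕ) :
    dyckTable (fun k : ℕ => (k : R) ^ 2) n n = (n ! : R) ^ 2 := by
  rw [dyckTable_self, prod_pow, ← prod_range_add_one_eq_factorial]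
  push_cast
  rfl

noncomputable def orthoPoly : ℕ → R[X]
  | 0 => 1
  | 1 => X
  | n + 2 => X * orthoPoly (n + 1) - C (w (n + 1)) * orthoPoly n

theorem natDegree_orthoPoly_le (n : ℕ) : (orthoPoly w n).natDegree ≤ n := by
  induction n using Nat.strong_induction_on with
  | _ n ih =>
    match n with
    | 0 => simp [orthoPoly]
    | 1 => simp only [orthoPoly]; exact natDegree_X_le
    | n + 2 =>
      rw [orthoPoly]
      refine (natDegree_sub_le _ _).trans (max_le ?_ ?_)
      · exact (natDegree_mul_le_of_le natDegree_X_le (ih (n + 1) (by omega))).trans (by omega)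
      · exact (natDegree_C_mul_le _ _).trans ((ih n (by omega)).trans (by omega))

theorem coeff_orthoPoly_of_lt {n k : ℕ} (h : n < k) : (orthoPoly w n).coeff k = 0 :=
  coeff_eq_zero_of_natDegree_lt ((natDegree_orthoPoly_le w n).trans_lt h)

theorem coeff_orthoPoly_self (n : ℕ) : (orthoPoly w n).coeff n = 1 := by
  induction n using Nat.strong_induction_on with
  | _ n ih =>
    match n with
    | 0 => simp [orthoPoly]
    | 1 => simp [orthoPoly]
    | n + 2 =>
      rw [orthoPoly, coeff_sub, coeff_X_mul, ih (n + 1) (by omega), coeff_C_mul,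
        coeff_orthoPoly_of_lt w (by omega), mul_zero, sub_zero]

theorem coeff_orthoPoly_of_odd {n k : ℕ} (h : Odd (n + k)) : (orthoPoly w n).coeff k = 0 := by
  rw [Nat.odd_iff] at h
  induction n using Nat.strong_induction_on generalizing k with
  | _ n ih =>
    match n, k with
    | 0, k => rw [orthoPoly, coeff_one, if_neg (by omega)]
    | 1, k => rw [orthoPoly, coeff_X, if_neg (by omega)]
    | n + 2, 0 =>
      rw [orthoPoly, coeff_sub, coeff_X_mul_zero, coeff_C_mul, ih n (by omega) (by omega),
        mul_zero, sub_zero]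
    | n + 2, k + 1 =>
      rw [orthoPoly, coeff_sub, coeff_X_mul, coeff_C_mul, ih (n + 1) (by omega) (by omega),
        ih n (by omega) (by omega), mul_zero, sub_zero]

noncomputable def dyckMoment : R[X] →ₗ[R] R :=
  lsum fun k => LinearMap.mulRight R (dyckTable w 0 k)

theorem dyckMoment_C_mul_X_pow (a : R) (k : ℕ) :
    dyckMoment w (C a * X ^ k) = a * dyckTable w 0 k := by
  simp [dyckMoment, C_mul_X_pow_eq_monomial, sum_monomial_index]

theorem dyckMoment_X_pow_mul_orthoPoly (n m : ℕ) :
    dyckMoment w (X ^ m * orthoPoly w n) = dyckTable w n m := by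
  induction n using Nat.strong_induction_on generalizing m with
  | _ n ih =>
    match n with
    | 0 => simpa [orthoPoly] using dyckMoment_C_mul_X_pow w 1 m
    | 1 => simpa [orthoPoly, ← pow_succ, dyckTable] using dyckMoment_C_mul_X_pow w 1 (m + 1)
    | n + 2 =>
      have hsplit : X ^ m * orthoPoly w (n + 2)
          = X ^ (m + 1) * orthoPoly w (n + 1) - w (n + 1) • (X ^ m * orthoPoly w n) := by
        rw [orthoPoly, smul_eq_C_mul]; ring
      rw [hsplit, map_sub, map_smul, ih (n + 1) (by omega), ih n (by omega), dyckTable,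
        smul_eq_mul]
      ring

theorem dyckMoment_X_pow_mul_eq_sum (m : ℕ) {p : R[X]} {N : ℕ} (hp : p.natDegree < N) :
    dyckMoment w (X ^ m * p) = ∑ k ∈ range N, p.coeff k * dyckTable w 0 (k + m) := by
  conv_lhs => rw [as_sum_range_C_mul_X_pow' p hp, mul_sum, map_sum]
  refine sum_congr rfl fun k _ => ?_
  rw [← dyckMoment_C_mul_X_pow, pow_add]
  ring_nf

theorem sum_coeff_orthoPoly_odd_mul_dyckTable {N i : ℕ} (hi : i < N) (m : ℕ) :
    ∑ l : Fin N, (orthoPoly w (2 * i + 1)).coeff (2 * l + 1) * dyckTable w 0 (2 * l + 1 + m)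
      = dyckTable w (2 * i + 1) m := by
  have hdeg : (orthoPoly w (2 * i + 1)).natDegree < 2 * N :=
    (natDegree_orthoPoly_le w _).trans_lt (by omega)
  have hodd : ∀ k, Even k → (orthoPoly w (2 * i + 1)).coeff k * dyckTable w 0 (k + m) = 0 :=
    fun k hk => by rw [coeff_orthoPoly_of_odd w ((odd_two_mul_add_one i).add_even hk), zero_mul]
  rw [Fin.sum_univ_eq_sum_range
      (fun l => (orthoPoly w (2 * i + 1)).coeff (2 * l + 1) * dyckTable w 0 (2 * l + 1 + m)),
    ← sum_range_two_mul_eq_sum_odd hodd, ← dyckMoment_X_pow_mul_eq_sum w m hdeg,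
    dyckMoment_X_pow_mul_orthoPoly]

theorem det_hankel_dyckTable_odd (N : ℕ) :
    (Matrix.of fun i j : Fin N => dyckTable w 0 (2 * (i + j : ℕ) + 2)).det
      = ∏ i : Fin N, dyckTable w (2 * i + 1) (2 * i + 1) := by
  set H := Matrix.of fun i j : Fin N => dyckTable w 0 (2 * (i + j : ℕ) + 2)
  set B := Matrix.of fun i l : Fin N => (orthoPoly w (2 * i + 1)).coeff (2 * l + 1)
  have hB : B.det = 1 := by
    rw [Matrix.det_of_isLowerTriangular B fun i l hil => coeff_orthoPoly_of_lt w (by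
      have : i < l := hil; omega)]
    exact prod_eq_one fun i _ => coeff_orthoPoly_self w _
  have hBH : B * H = Matrix.of fun i k : Fin N => dyckTable w (2 * i + 1) (2 * k + 1) := by
    ext i k
    rw [Matrix.mul_apply, Matrix.of_apply, ← sum_coeff_orthoPoly_odd_mul_dyckTable w i.isLt]
    refine sum_congr rfl fun l _ => ?_
    simp only [B, H, Matrix.of_apply]
    congr 2
    ring
  have hupper : (B * H).IsUpperTriangular := fun i k hki => by
    rw [hBH, Matrix.of_apply, dyckTable_eq_zero_of_lt w (by have : k < i := hki; omega)]
  calc H.det = (B * H).det := by rw [Matrix.det_mul, hB, one_mul]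
    _ = _ := by rw [Matrix.det_of_isUpperTriangular hupper, hBH]; rfl

end DyckTable

open Real Filter Topology

theorem Function.Odd.iteratedDeriv_zero_eq_zero {F : Type*} [NormedAddCommGroup F]
    [NormedSpace ℝ F] {f : ℝ → F} (hf : f.Odd) {k : ℕ} (hk : Even k) :
    iteratedDeriv k f 0 = 0 := by
  have h := iteratedDeriv_comp_neg k f 0
  rw [show (fun x => f (-x)) = -f from funext hf, iteratedDeriv_neg, neg_zero, hk.neg_one_pow,
    one_smul] at h
  have h2 : (2 : ℝ) • iteratedDeriv k f 0 = 0 := by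
    rw [two_smul]; nth_rewrite 1 [← h]; exact neg_add_cancel _
  exact (smul_eq_zero.mp h2).resolve_left two_ne_zero

noncomputable def tanPowSec (n : ℕ) (x : ℝ) : ℝ := n ! * (tan x ^ n * (cos x)⁻¹)

theorem contDiffAt_tanPowSec (n : ℕ) {m : WithTop ℕ∞} {x : ℝ} (hx : cos x ≠ 0) :
    ContDiffAt ℝ m (tanPowSec n) x :=
  contDiffAt_const.mul (((contDiffAt_tan.2 hx).pow n).mul (contDiff_cos.contDiffAt.inv hx))

theorem hasDerivAt_tanPowSec (n : ℕ) {x : ℝ} (hx : cos x ≠ 0) :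
    HasDerivAt (tanPowSec n) (tanPowSec (n + 1) x + (n : ℝ) ^ 2 * tanPowSec (n - 1) x) x := by
  have h := ((((hasDerivAt_tan hx).pow n).mul ((hasDerivAt_cos x).inv hx)).const_mul
    (n ! : ℝ))
  have hsec2 : 1 / cos x ^ 2 = 1 + tan x ^ 2 := by
    rw [one_div, ← inv_one_add_tan_sq hx, inv_inv]
  have hsin : -(-sin x) / cos x ^ 2 = tan x * (cos x)⁻¹ := by
    rw [tan_eq_sin_div_cos]; field_simp
  rw [hsec2, hsin] at h
  refine h.congr_deriv ?_
  rcases n with _ | n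
  · simp [tanPowSec]
  · simp only [tanPowSec, factorial_succ, add_tsub_cancel_right, Pi.pow_apply, Pi.inv_apply]
    push_cast
    ring

theorem iteratedDeriv_tanPowSec_zero (m n : ℕ) :
    iteratedDeriv m (tanPowSec n) 0 = dyckTable (fun k : ℕ => (k : ℝ) ^ 2) n m := by
  induction m generalizing n with
  | zero => rcases n with _ | n <;> simp [tanPowSec, dyckTable]
  | succ m ih =>
    have hcos : ∀ᶠ x in 𝓝 (0 : ℝ), cos x ≠ 0 :=
      continuous_cos.continuousAt.eventually_ne (by simp)
    have hderiv : deriv (tanPowSec n) =ᶠ[𝓝 0]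
        fun x => tanPowSec (n + 1) x + (n : ℝ) ^ 2 * tanPowSec (n - 1) x :=
      hcos.mono fun x hx => (hasDerivAt_tanPowSec n hx).deriv
    have hc : cos 0 ≠ 0 := by simp
    rw [iteratedDeriv_succ', hderiv.iteratedDeriv_eq, iteratedDeriv_fun_add
      (contDiffAt_tanPowSec _ hc) (contDiffAt_const.mul (contDiffAt_tanPowSec _ hc)),
      iteratedDeriv_const_mul_field, ih, ih]
    rcases n with _ | n <;> simp [dyckTable]

theorem eulerE_of_even {k : ℕ} (hk : Even k) :
    eulerE k = dyckTable (fun j : ℕ => (j : ℝ) ^ 2) 0 k := by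
  have hc : cos 0 ≠ 0 := by simp
  rw [eulerE, iteratedDeriv_fun_add (g := fun x => (cos x)⁻¹) (contDiffAt_tan.2 hc)
      (contDiff_cos.contDiffAt.inv hc),
    (show Function.Odd tan from tan_neg).iteratedDeriv_zero_eq_zero hk, zero_add,
    ← iteratedDeriv_tanPowSec_zero]
  congr 1
  funext x
  simp [tanPowSec]

theorem hankel_secant_shifted (n : ℕ) :
    Matrix.det (fun i j : Fin n => eulerE (2 * ((i : ℕ) + (j : ℕ)) + 2))
      = ∏ k ∈ Finset.Icc 1 (n-1), (Nat.factorial (2*k+1) : ℝ)^2 := by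
  have hentries : (fun i j : Fin n => eulerE (2 * ((i : ℕ) + (j : ℕ)) + 2))
      = Matrix.of fun i j : Fin n => dyckTable (fun k : ℕ => (k : ℝ) ^ 2) 0 (2 * (i + j : ℕ) + 2) :=
    funext₂ fun i j => eulerE_of_even ((even_two_mul _).add even_two)
  rw [hentries, det_hankel_dyckTable_odd]
  simp_rw [dyckTable_sq_self]
  rw [Fin.prod_univ_eq_prod_range (fun i => ((2 * i + 1)! : ℝ) ^ 2) n]
  refine (prod_subset (fun k hk => ?_) fun k hk hk' => ?_).symm
  · simp only [mem_Icc, mem_range] at hk ⊢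
    omega
  · obtain rfl : k = 0 := by simp only [mem_Icc, mem_range] at hk hk'; omega
    simp
end

section
/- The Hankel determinants of the sequence (E_1, 0, E_3, 0, E_5, ...) of interleaved tangent numbers are H_n = n! · Π_{k=1}^{n−1} (k!)². -/
open Finset

/-!
The Hankel matrix of the moments `μ_{i+j}` of a Stieltjes continued fraction
`1 / (1 - w₀ t² / (1 - w₁ t² / (1 - ⋯)))` factors as `L D Lᵀ`, where `L` is the unitriangular
matrix of weighted Dyck path counts and `D = diag (w₀ ⋯ w_{k-1})`: the rows of `L` obey a
three-term recurrence whose transfer matrix `J` has `J D` symmetric. Hence the determinant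
is `∏_{k<n} w₀ ⋯ w_{k-1}`.

The derivative polynomials of `tan`, `P_{n+1} = (1 + x²) P_n'`, have coefficients
`[x^{k+1}] P_n = k! · L(n, k)` for the weights `w_k = (k+1)(k+2)`, so the interleaved tangent
numbers are the moments of that fraction, and `w₀ ⋯ w_{k-1} = k! (k+1)!`.
-/

open Matrix Polynomial
open scoped Nat

section StieltjesTable

variable {R : Type*}

/-- `stieltjesTable w n k` is the weighted number of Dyck path prefixes of length `n` ending at
height `k`, a down step from height `k + 1` having weight `w k`. -/
def stieltjesTable [Semiring R] (w : ℕ → R) : ℕ → ℕ → R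
  | 0, 0 => 1
  | 0, _ + 1 => 0
  | n + 1, 0 => w 0 * stieltjesTable w n 1
  | n + 1, k + 1 => stieltjesTable w n k + w (k + 1) * stieltjesTable w n (k + 2)

section Semiring

variable [Semiring R] (w : ℕ → R)

theorem stieltjesTable_eq_zero_of_lt {n k : ℕ} (h : n < k) : stieltjesTable w n k = 0 := by
  induction n generalizing k with
  | zero =>
    obtain ⟨j, rfl⟩ := Nat.exists_eq_add_one.mpr h
    rfl
  | succ n ih =>
    obtain ⟨j, rfl⟩ := Nat.exists_eq_add_one.mpr (Nat.zero_lt_of_lt h)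
    rw [stieltjesTable, ih (by omega), ih (by omega), mul_zero, add_zero]

theorem stieltjesTable_self (n : ℕ) : stieltjesTable w n n = 1 := by
  induction n with
  | zero => rfl
  | succ n ih =>
    rw [stieltjesTable, ih, stieltjesTable_eq_zero_of_lt w (by omega), mul_zero, add_zero]

theorem stieltjesTable_eq_zero_of_odd {n k : ℕ} (h : Odd (n + k)) : stieltjesTable w n k = 0 := by
  induction n generalizing k with
  | zero =>
    obtain ⟨j, rfl⟩ : ∃ j, k = j + 1 := Nat.exists_eq_add_one.mpr (by grind)
    rfl
  | succ n ih =>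
    cases k with
    | zero => rw [stieltjesTable, ih (by grind), mul_zero]
    | succ k => rw [stieltjesTable, ih (by grind), ih (by grind), mul_zero, add_zero]

end Semiring

section CommSemiring

variable [CommSemiring R] (w : ℕ → R)

def stieltjesWeight (k : ℕ) : R := ∏ i ∈ range k, w i

theorem stieltjesWeight_succ (k : ℕ) : stieltjesWeight w (k + 1) = stieltjesWeight w k * w k :=
  prod_range_succ w k

/-- One step of the recurrence moves the first row index into a sum that is symmetric in `a`
and `b`. -/
theorem sum_stieltjesTable_succ_mul {M a : ℕ} (b : ℕ) (ha : a ≤ M) :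
    ∑ k ∈ range (M + 1), stieltjesTable w (a + 1) k * stieltjesTable w b k * stieltjesWeight w k
      = ∑ k ∈ range M,
            stieltjesTable w a k * stieltjesTable w b (k + 1) * stieltjesWeight w (k + 1)
        + ∑ k ∈ range M,
            stieltjesTable w a (k + 1) * stieltjesTable w b k * stieltjesWeight w (k + 1) := by
  set T := stieltjesTable w
  set h := stieltjesWeight w
  have hstep : ∀ k, T (a + 1) (k + 1) * T b (k + 1) * h (k + 1)
      = T a k * T b (k + 1) * h (k + 1) + T a (k + 2) * T b (k + 1) * h (k + 2) := by
    intro k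
    simp only [T, h, stieltjesTable, stieltjesWeight_succ]
    ring
  have hbottom : T (a + 1) 0 * T b 0 * h 0 = T a 1 * T b 0 * h 1 := by
    simp only [T, h, stieltjesTable, stieltjesWeight, prod_range_one, prod_range_zero]
    ring
  have htop : T a (M + 1) = 0 := stieltjesTable_eq_zero_of_lt w (by omega)
  rw [sum_range_succ', sum_congr rfl fun k _ => hstep k, sum_add_distrib, add_assoc, hbottom,
    ← sum_range_succ' (fun k => T a (k + 1) * T b k * h (k + 1)), sum_range_succ, htop]
  ring

theorem sum_stieltjesTable_succ_mul_comm {M a b : ℕ} (ha : a ≤ M) (hb : b ≤ M) :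
    ∑ k ∈ range (M + 1), stieltjesTable w (a + 1) k * stieltjesTable w b k * stieltjesWeight w k
      = ∑ k ∈ range (M + 1),
          stieltjesTable w a k * stieltjesTable w (b + 1) k * stieltjesWeight w k := by
  have hswap := sum_stieltjesTable_succ_mul w a hb
  rw [sum_stieltjesTable_succ_mul w b ha, add_comm]
  simp only [mul_comm (stieltjesTable w a _)] at hswap ⊢
  exact hswap.symm

theorem sum_range_stieltjesTable_mul_of_le {N N' i : ℕ} (j : ℕ) (hi : i < N) (hN : N ≤ N') :
    ∑ k ∈ range N, stieltjesTable w i k * stieltjesTable w j k * stieltjesWeight w k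
      = ∑ k ∈ range N', stieltjesTable w i k * stieltjesTable w j k * stieltjesWeight w k := by
  refine sum_subset (range_subset_range.mpr hN) fun k _ hk => ?_
  rw [stieltjesTable_eq_zero_of_lt w (by simp at hk; omega), zero_mul, zero_mul]

theorem sum_stieltjesTable_mul {N i : ℕ} (j : ℕ) (hi : i < N) :
    ∑ k ∈ range N, stieltjesTable w i k * stieltjesTable w j k * stieltjesWeight w k
      = stieltjesTable w (i + j) 0 := by
  suffices h : ∀ i j, ∑ k ∈ range (i + j + 1),
      stieltjesTable w i k * stieltjesTable w j k * stieltjesWeight w k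
        = stieltjesTable w (i + j) 0 by
    rw [sum_range_stieltjesTable_mul_of_le w j hi (le_max_left N (i + j + 1)),
      ← sum_range_stieltjesTable_mul_of_le w j (by omega) (le_max_right N (i + j + 1)), h]
  intro i
  induction i with
  | zero =>
    intro j
    rw [sum_eq_single_of_mem 0 (by simp) fun k _ hk => by
      rw [stieltjesTable_eq_zero_of_lt w (Nat.pos_of_ne_zero hk), zero_mul, zero_mul]]
    simp [stieltjesTable, stieltjesWeight]
  | succ i ih =>
    intro j
    rw [show i + 1 + j + 1 = i + j + 1 + 1 by omega,
      sum_stieltjesTable_succ_mul_comm w (by omega) (by omega),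
      show i + j + 1 + 1 = i + (j + 1) + 1 by omega, ih, show i + (j + 1) = i + 1 + j by omega]

end CommSemiring

theorem det_hankel_stieltjesTable [CommRing R] (w : ℕ → R) (n : ℕ) :
    det (of fun i j : Fin n => stieltjesTable w (i + j) 0)
      = ∏ k ∈ range n, stieltjesWeight w k := by
  set L : Matrix (Fin n) (Fin n) R := of fun i k => stieltjesTable w i k
  have hL : L.det = 1 := by
    rw [det_of_isLowerTriangular L fun i j hij => stieltjesTable_eq_zero_of_lt w hij]
    simp [L, stieltjesTable_self]
  have hLDL : (of fun i j : Fin n => stieltjesTable w (i + j) 0)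
      = L * diagonal (fun k : Fin n => stieltjesWeight w k) * Lᵀ := by
    ext i j
    rw [mul_apply]
    simp only [mul_diagonal, transpose_apply, L, of_apply]
    rw [Fin.sum_univ_eq_sum_range (fun k => stieltjesTable w i k * stieltjesWeight w k *
      stieltjesTable w j k), ← sum_stieltjesTable_mul w j i.isLt]
    exact sum_congr rfl fun k _ => mul_right_comm _ _ _
  rw [hLDL, det_mul, det_mul, det_transpose, hL, det_diagonal, one_mul, mul_one,
    Fin.prod_univ_eq_prod_range (stieltjesWeight w)]

end StieltjesTable

section TangentNumbers

/-- `tan⁽ⁿ⁾ = tanDerivPoly n ∘ tan`. -/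
noncomputable def tanDerivPoly : ℕ → ℝ[X]
  | 0 => X
  | n + 1 => (1 + X ^ 2) * derivative (tanDerivPoly n)

/-- `sec⁽ⁿ⁾ = sec · (secDerivPoly n ∘ tan)`. -/
noncomputable def secDerivPoly : ℕ → ℝ[X]
  | 0 => 1
  | n + 1 => X * secDerivPoly n + (1 + X ^ 2) * derivative (secDerivPoly n)

theorem hasDerivAt_eval_tan_add_inv_cos_mul (p q : ℝ[X]) {x : ℝ} (hx : Real.cos x ≠ 0) :
    HasDerivAt (fun y => p.eval (Real.tan y) + (Real.cos y)⁻¹ * q.eval (Real.tan y))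
      (((1 + X ^ 2) * derivative p).eval (Real.tan x)
        + (Real.cos x)⁻¹ * (X * q + (1 + X ^ 2) * derivative q).eval (Real.tan x)) x := by
  have htan : HasDerivAt Real.tan (1 / Real.cos x ^ 2) x := Real.hasDerivAt_tan hx
  have hsec : HasDerivAt (fun y => (Real.cos y)⁻¹) (Real.sin x / Real.cos x ^ 2) x :=
    ((Real.hasDerivAt_cos x).inv hx).congr_deriv (by ring)
  refine (((p.hasDerivAt _).comp x htan).add
    (hsec.mul ((q.hasDerivAt _).comp x htan))).congr_deriv ?_
  have hsq : 1 / Real.cos x ^ 2 = 1 + Real.tan x ^ 2 := by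
    rw [Real.tan_eq_sin_div_cos]
    field_simp
    linear_combination -Real.sin_sq_add_cos_sq x
  have hsin : Real.sin x / Real.cos x ^ 2 = (Real.cos x)⁻¹ * Real.tan x := by
    rw [Real.tan_eq_sin_div_cos]
    ring
  simp only [hsq, hsin, Function.comp_apply, eval_mul, eval_add, eval_one, eval_pow, eval_X]
  ring

theorem iteratedDeriv_tan_add_inv_cos_s13 (n : ℕ) {x : ℝ} (hx : Real.cos x ≠ 0) :
    iteratedDeriv n (fun x => Real.tan x + (Real.cos x)⁻¹) x
      = (tanDerivPoly n).eval (Real.tan x)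
        + (Real.cos x)⁻¹ * (secDerivPoly n).eval (Real.tan x) := by
  induction n generalizing x with
  | zero => simp [tanDerivPoly, secDerivPoly]
  | succ n ih =>
    have hnhds : {y | Real.cos y ≠ 0} ∈ nhds x :=
      (isOpen_ne_fun Real.continuous_cos continuous_const).mem_nhds hx
    rw [iteratedDeriv_succ, (Filter.eventuallyEq_of_mem hnhds fun y hy => ih hy).deriv_eq]
    exact (hasDerivAt_eval_tan_add_inv_cos_mul _ _ hx).deriv

def tangentWeight (k : ℕ) : ℝ := (k + 1) * (k + 2)

theorem stieltjesWeight_tangentWeight (k : ℕ) :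
    stieltjesWeight tangentWeight k = (k ! * (k + 1)! : ℕ) := by
  induction k with
  | zero => simp [stieltjesWeight]
  | succ k ih =>
    rw [stieltjesWeight_succ, ih, tangentWeight, Nat.factorial_succ (k + 1), Nat.factorial_succ k]
    push_cast
    ring

theorem coeff_tanDerivPoly_succ (n k : ℕ) :
    (tanDerivPoly n).coeff (k + 1) = stieltjesTable tangentWeight n k * k ! := by
  induction n generalizing k with
  | zero => cases k <;> simp [tanDerivPoly, stieltjesTable, coeff_X]
  | succ n ih =>
    rw [tanDerivPoly, add_mul, one_mul, coeff_add, coeff_X_pow_mul', coeff_derivative, ih]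
    cases k with
    | zero =>
      simp only [stieltjesTable, tangentWeight]
      push_cast [Nat.factorial]
      ring
    | succ k =>
      rw [if_pos (by omega), show k + 1 + 1 - 2 = k from rfl, coeff_derivative, ih,
        stieltjesTable, tangentWeight]
      push_cast [Nat.factorial_succ]
      ring

theorem coeff_tanDerivPoly_succ_zero (n : ℕ) :
    (tanDerivPoly (n + 1)).coeff 0 = stieltjesTable tangentWeight n 0 := by
  rw [tanDerivPoly, add_mul, one_mul, coeff_add, coeff_X_pow_mul', if_neg (by omega),
    coeff_derivative, coeff_tanDerivPoly_succ]
  simp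

theorem coeff_secDerivPoly_eq_zero_of_odd {n k : ℕ} (h : Odd (n + k)) :
    (secDerivPoly n).coeff k = 0 := by
  induction n generalizing k with
  | zero => simp [secDerivPoly, coeff_one, show k ≠ 0 by grind]
  | succ n ih =>
    rw [secDerivPoly, add_mul, one_mul, coeff_add, coeff_add, coeff_X_pow_mul',
      coeff_derivative, ih (by grind)]
    rcases k with _ | _ | k
    · simp
    · simp [coeff_X_mul, ih (show Odd (n + 0) by grind)]
    · rw [coeff_X_mul, ih (by grind), if_pos (by omega), show k + 1 + 1 - 2 = k from rfl,
        coeff_derivative, ih (by grind)]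
      simp

theorem eulerE_succ_of_even {m : ℕ} (hm : Even m) :
    eulerE (m + 1) = stieltjesTable tangentWeight m 0 := by
  rw [eulerE, iteratedDeriv_tan_add_inv_cos_s13 (m + 1) (by simp), Real.tan_zero, Real.cos_zero,
    inv_one, one_mul, ← coeff_zero_eq_eval_zero, ← coeff_zero_eq_eval_zero,
    coeff_tanDerivPoly_succ_zero, coeff_secDerivPoly_eq_zero_of_odd (by grind), add_zero]

end TangentNumbers

theorem Nat.prod_range_factorial_mul_factorial_succ (n : ℕ) :
    ∏ k ∈ range n, k ! * (k + 1)! = n ! * ∏ k ∈ Icc 1 (n - 1), k ! ^ 2 := by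
  induction n with
  | zero => simp
  | succ n ih =>
    rw [prod_range_succ, ih]
    rcases n with _ | n
    · simp
    · simp only [Nat.add_sub_cancel]
      rw [prod_Icc_succ_top (by omega), Nat.factorial_succ (n + 1)]
      ring

theorem hankel_interleaved_tangent (n : ℕ) :
    Matrix.det (fun i j : Fin n =>
        if Even ((i : ℕ) + (j : ℕ)) then eulerE ((i : ℕ) + (j : ℕ) + 1) else 0)
      = (Nat.factorial n : ℝ) * ∏ k ∈ Finset.Icc 1 (n-1), (Nat.factorial (k) : ℝ)^2 := by
  have hentry : ∀ m : ℕ,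
      (if Even m then eulerE (m + 1) else 0) = stieltjesTable tangentWeight m 0 := fun m => by
    split_ifs with hm
    · exact eulerE_succ_of_even hm
    · exact (stieltjesTable_eq_zero_of_odd _ (by simpa using hm)).symm
  simp_rw [hentry]
  calc _ = ∏ k ∈ range n, stieltjesWeight tangentWeight k := det_hankel_stieltjesTable _ n
    _ = _ := by
      simp_rw [stieltjesWeight_tangentWeight]
      exact_mod_cast Nat.prod_range_factorial_mul_factorial_succ n
end

section
/- The Hankel determinants of the sequence (0, E_2, 0, E_4, 0, ...) satisfy H_{2n+1} = 0 and H_{2n} = (−1)^n Π_{k=1}^{n−1} ((2k+1)!)⁴. -/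
open Finset

noncomputable def Hsec0 (n : ℕ) : ℝ :=
  Matrix.det (fun i j : Fin n =>
    if Odd ((i : ℕ) + (j : ℕ)) then eulerE ((i : ℕ) + (j : ℕ) + 1) else 0)

/-!
Since `(sec tanᵏ)' = k sec tanᵏ⁻¹ + (k + 1) sec tanᵏ⁺¹`, the numbers `G n k = (sec tanᵏ)⁽ⁿ⁾(0)`
count lattice paths with steps `±1` from height `k` down to `0`, a step between heights `h` and
`h + 1` having weight `h + 1`. Splitting a path at time `i` gives `∑ₖ G i k * G j k = G (i + j) 0`.
As `tan` is odd, `G m 0 = E_m` for even `m`, while `G m 0 = 0` for odd `m`; so every Hankel entry is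
`G (i + j + 1) 0`, and the Hankel matrix factors as `L J Lᵀ` with `L = (G i k)` lower triangular
with diagonal `i!` and `J` the symmetric tridiagonal matrix with zero diagonal and off-diagonal
entries `1, 2, 3, …`. Expanding `det J` along its first row and column peels off `-(2j + 1)²` two
sizes at a time, ending in `0` for odd size.
-/

open Matrix Real
open scoped Nat

section Paths

variable {R : Type*} [CommRing R]

/-- The weighted number of paths with steps `±1` of length `n` from height `k` down to `0`,
a step between heights `h` and `h + 1` having weight `w h`. -/
def pathWeight (w : ℕ → R) : ℕ → ℕ → R
  | 0, k => if k = 0 then 1 else 0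
  | n + 1, 0 => w 0 * pathWeight w n 1
  | n + 1, k + 1 => w k * pathWeight w n k + w (k + 1) * pathWeight w n (k + 2)

def jacobiMatrix (w : ℕ → R) (N : ℕ) : Matrix (Fin N) (Fin N) R :=
  of fun i j => if (i : ℕ) + 1 = j then w i else if (j : ℕ) + 1 = i then w j else 0

def pathMatrix (w : ℕ → R) (n : ℕ) : Matrix (Fin n) (Fin n) R :=
  of fun i k => pathWeight w i k

variable (w : ℕ → R)

theorem pathWeight_eq_zero_of_lt {n k : ℕ} (h : n < k) : pathWeight w n k = 0 := by
  induction n generalizing k with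
  | zero => simp [pathWeight, Nat.pos_iff_ne_zero.mp h]
  | succ n ih =>
    obtain _ | k := k
    · omega
    · rw [pathWeight, ih (by omega), ih (by omega), mul_zero, mul_zero, add_zero]

theorem pathWeight_self (n : ℕ) : pathWeight w n n = ∏ i ∈ range n, w i := by
  induction n with
  | zero => simp [pathWeight]
  | succ n ih =>
    rw [pathWeight, ih, pathWeight_eq_zero_of_lt w (by omega), prod_range_succ, mul_zero, add_zero,
      mul_comm]

theorem pathWeight_eq_zero_of_odd {n k : ℕ} (h : Odd (n + k)) : pathWeight w n k = 0 := by
  induction n generalizing k with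
  | zero => simp only [pathWeight, ite_eq_right_iff]; rintro rfl; simp at h
  | succ n ih =>
    obtain _ | k := k
    · rw [pathWeight, ih (by simpa [add_comm] using h), mul_zero]
    · rw [pathWeight, ih (by grind), ih (by grind), mul_zero, mul_zero, add_zero]

theorem jacobiMatrix_transpose (N : ℕ) : (jacobiMatrix w N)ᵀ = jacobiMatrix w N := by
  ext i j
  simp only [jacobiMatrix, transpose_apply, of_apply]
  split_ifs <;> grind

/-- Truncating the path recurrence to heights below `N` loses the term
`w (N - 1) * pathWeight w n N` at `k = N - 1`; it vanishes as soon as `n < N`. -/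
theorem jacobiMatrix_mulVec_pathWeight {N n : ℕ} (k : Fin N) (h : (k : ℕ) + 1 < N ∨ n < N) :
    (jacobiMatrix w N *ᵥ fun l => pathWeight w n l) k = pathWeight w (n + 1) k := by
  have hsplit : (jacobiMatrix w N *ᵥ fun l => pathWeight w n l) k =
      ∑ l ∈ range N, ((if (k : ℕ) + 1 = l then w k * pathWeight w n l else 0) +
        if l + 1 = k then w l * pathWeight w n l else 0) := by
    rw [← Fin.sum_univ_eq_sum_range fun l : ℕ => (if (k : ℕ) + 1 = l then w k * pathWeight w n l
      else 0) + if l + 1 = k then w l * pathWeight w n l else 0]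
    simp only [mulVec, dotProduct, jacobiMatrix, of_apply]
    refine sum_congr rfl fun l _ => ?_
    split_ifs <;> grind
  have hup : w k * pathWeight w n (k + 1) =
      if (k : ℕ) + 1 ∈ range N then w k * pathWeight w n (k + 1) else 0 := by
    split_ifs with hk
    · rfl
    · rw [pathWeight_eq_zero_of_lt w (by grind), mul_zero]
  rw [hsplit, sum_add_distrib, sum_ite_eq, ← hup]
  obtain ⟨_ | k, hk⟩ := k
  · simp [pathWeight]
  · simp only [Nat.add_right_cancel_iff]
    rw [sum_ite_eq' (range N) k fun l => w l * pathWeight w n l,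
      if_pos (mem_range.mpr (by omega)), pathWeight]
    ring

/-- The symmetry of `jacobiMatrix` moves one step of a path from one factor to the other. -/
theorem dotProduct_pathWeight {N i : ℕ} (hi : i < N) (j : ℕ) :
    ((fun k : Fin N => pathWeight w i k) ⬝ᵥ fun k => pathWeight w j k) =
      pathWeight w (i + j) 0 := by
  induction i generalizing j with
  | zero =>
    rw [dotProduct, Fin.sum_univ_eq_sum_range fun k => pathWeight w 0 k * pathWeight w j k]
    simp [pathWeight, hi]
  | succ i ih =>
    have hsucc : (fun k : Fin N => pathWeight w (i + 1) k) =
        jacobiMatrix w N *ᵥ fun k => pathWeight w i k :=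
      funext fun k => (jacobiMatrix_mulVec_pathWeight w k (Or.inr (by omega))).symm
    have hboundary : ((fun k : Fin N => pathWeight w i k) ⬝ᵥ
        jacobiMatrix w N *ᵥ fun k => pathWeight w j k) =
        (fun k : Fin N => pathWeight w i k) ⬝ᵥ fun k => pathWeight w (j + 1) k := by
      refine sum_congr rfl fun k _ => ?_
      by_cases hk : (k : ℕ) + 1 < N
      · rw [jacobiMatrix_mulVec_pathWeight w k (Or.inl hk)]
      · dsimp only
        rw [pathWeight_eq_zero_of_lt w (by omega), zero_mul, zero_mul]
    rw [hsucc, ← vecMul_transpose, jacobiMatrix_transpose, ← dotProduct_mulVec, hboundary,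
      ih (by omega), add_right_comm, add_assoc]

theorem hankel_pathWeight_eq_pathMatrix_mul (n : ℕ) :
    (of fun i j : Fin n => pathWeight w (i + j + 1) 0) =
      pathMatrix w n * jacobiMatrix w n * (pathMatrix w n)ᵀ := by
  ext i j
  have hrow : (pathMatrix w n * jacobiMatrix w n) i = fun k : Fin n => pathWeight w (i + 1) k := by
    change pathMatrix w n i ᵥ* jacobiMatrix w n = _
    rw [← mulVec_transpose, jacobiMatrix_transpose]
    exact funext fun k => jacobiMatrix_mulVec_pathWeight w k (Or.inr i.isLt)
  rw [mul_apply', hrow, dotProduct_comm]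
  simp only [of_apply, transpose_apply, pathMatrix]
  rw [dotProduct_pathWeight w j.isLt, add_comm (j : ℕ), add_right_comm]

theorem det_pathMatrix (n : ℕ) : (pathMatrix w n).det = ∏ i : Fin n, ∏ t ∈ range i, w t := by
  rw [det_of_isLowerTriangular (pathMatrix w n) fun i k hik => pathWeight_eq_zero_of_lt w hik]
  exact prod_congr rfl fun i _ => pathWeight_self w i

theorem det_hankel_pathWeight (n : ℕ) :
    (of fun i j : Fin n => pathWeight w (i + j + 1) 0).det =
      (∏ i : Fin n, ∏ t ∈ range i, w t) ^ 2 * (jacobiMatrix w n).det := by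
  rw [hankel_pathWeight_eq_pathMatrix_mul, det_mul, det_mul, det_transpose, det_pathMatrix]
  ring

theorem det_jacobiMatrix_add_two (N : ℕ) :
    (jacobiMatrix w (N + 2)).det = -w 0 ^ 2 * (jacobiMatrix (fun k => w (k + 2)) N).det := by
  set M := (jacobiMatrix w (N + 2)).submatrix Fin.succ (Fin.succAbove 1)
  have hminor : M.submatrix (Fin.succAbove 0) Fin.succ = jacobiMatrix (fun k => w (k + 2)) N := by
    ext i j
    simp [M, jacobiMatrix]
  rw [det_succ_row_zero, Fin.sum_univ_succ, Fin.sum_univ_succ, Fin.succ_zero_eq_one,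
    det_succ_column_zero M, Fin.sum_univ_succ, hminor]
  simp [M, jacobiMatrix, sq, mul_assoc]

theorem det_jacobiMatrix_two_mul_add_one (m : ℕ) : (jacobiMatrix w (2 * m + 1)).det = 0 := by
  induction m generalizing w with
  | zero => simp [jacobiMatrix]
  | succ m ih =>
    rw [show 2 * (m + 1) + 1 = 2 * m + 1 + 2 by ring, det_jacobiMatrix_add_two, ih, mul_zero]

theorem det_jacobiMatrix_two_mul (m : ℕ) :
    (jacobiMatrix w (2 * m)).det = ∏ j ∈ range m, -w (2 * j) ^ 2 := by
  induction m generalizing w with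
  | zero => simp
  | succ m ih =>
    rw [mul_add_one, det_jacobiMatrix_add_two, ih, prod_range_succ']
    simp only [mul_add_one, mul_zero]
    ring

end Paths

theorem Function.Odd.iteratedDeriv_eq_zero_of_even {F : Type*} [NormedAddCommGroup F]
    [NormedSpace ℝ F] {f : ℝ → F} (hf : f.Odd) {n : ℕ} (hn : Even n) :
    iteratedDeriv n f 0 = 0 := by
  have h := iteratedDeriv_comp_neg n f 0
  rw [show (fun x => f (-x)) = fun x => -f x from funext hf, iteratedDeriv_fun_neg, neg_zero,
    hn.neg_one_pow, one_smul] at h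
  have htwo : (2 : ℝ) • iteratedDeriv n f 0 = 0 := by
    rw [two_smul]
    nth_rw 1 [← h]
    exact neg_add_cancel _
  exact (smul_eq_zero.mp htwo).resolve_left two_ne_zero

noncomputable def secMulTanPow (k : ℕ) (x : ℝ) : ℝ := (cos x)⁻¹ * tan x ^ k

theorem contDiffAt_secMulTanPow (k : ℕ) {x : ℝ} (hx : cos x ≠ 0) :
    ContDiffAt ℝ ⊤ (secMulTanPow k) x :=
  (contDiff_cos.contDiffAt.inv hx).mul ((contDiffAt_tan.mpr hx).pow k)

theorem hasDerivAt_secMulTanPow (k : ℕ) {x : ℝ} (hx : cos x ≠ 0) :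
    HasDerivAt (secMulTanPow k)
      (k * secMulTanPow (k - 1) x + (k + 1) * secMulTanPow (k + 1) x) x := by
  refine (((hasDerivAt_cos x).inv hx).mul ((hasDerivAt_tan hx).pow k)).congr_deriv ?_
  have hsec' : - -sin x / cos x ^ 2 = tan x * (cos x)⁻¹ := by
    rw [neg_neg, tan_eq_sin_div_cos]
    field_simp
  rw [hsec', one_div, ← inv_one_add_tan_sq hx, inv_inv]
  obtain _ | k := k
  · simp only [secMulTanPow, Pi.pow_apply, Pi.inv_apply]
    ring
  · simp only [secMulTanPow, Pi.pow_apply, Pi.inv_apply, Nat.add_sub_cancel]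
    push_cast
    ring

theorem iteratedDeriv_secMulTanPow_zero (n k : ℕ) :
    iteratedDeriv n (secMulTanPow k) 0 = pathWeight (fun t => (t : ℝ) + 1) n k := by
  induction n generalizing k with
  | zero => cases k <;> simp [secMulTanPow, pathWeight]
  | succ n ih =>
    have hcos : cos 0 ≠ 0 := by simp
    have hderiv : deriv (secMulTanPow k) =ᶠ[nhds 0]
        fun x => k * secMulTanPow (k - 1) x + (k + 1) * secMulTanPow (k + 1) x := by
      filter_upwards [continuous_cos.continuousAt.eventually_ne hcos] with x hx
      exact (hasDerivAt_secMulTanPow k hx).deriv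
    have hdiff (j : ℕ) : ContDiffAt ℝ n (secMulTanPow j) 0 :=
      (contDiffAt_secMulTanPow j hcos).of_le le_top
    rw [iteratedDeriv_succ', hderiv.iteratedDeriv_eq, iteratedDeriv_fun_add
      (contDiffAt_const.mul (hdiff _)) (contDiffAt_const.mul (hdiff _)),
      iteratedDeriv_const_mul_field, iteratedDeriv_const_mul_field, ih, ih]
    cases k <;> simp [pathWeight]

theorem eulerE_of_even_s17 {m : ℕ} (hm : Even m) :
    eulerE m = pathWeight (fun t => (t : ℝ) + 1) m 0 := by
  have hcos : cos 0 ≠ 0 := by simp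
  rw [eulerE, iteratedDeriv_fun_add (f := tan) (g := fun x => (cos x)⁻¹)
    ((contDiffAt_tan.mpr hcos).of_le le_top) ((contDiff_cos.contDiffAt.inv hcos).of_le le_top),
    Function.Odd.iteratedDeriv_eq_zero_of_even tan_neg hm, zero_add,
    ← iteratedDeriv_secMulTanPow_zero]
  congr 1 with x
  simp [secMulTanPow]

theorem Hsec0_eq_det_hankel_pathWeight (n : ℕ) :
    Hsec0 n = (of fun i j : Fin n => pathWeight (fun t => (t : ℝ) + 1) (i + j + 1) 0).det := by
  rw [Hsec0]
  congr 1
  ext i j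
  split_ifs with h
  · exact eulerE_of_even_s17 h.add_one
  · exact (pathWeight_eq_zero_of_odd _ (by simpa using (Nat.not_odd_iff_even.mp h).add_one)).symm

theorem Hsec0_eq_prod_factorial_sq_mul_det (n : ℕ) :
    Hsec0 n = (∏ i ∈ range n, (i ! : ℝ)) ^ 2 * (jacobiMatrix (fun t => (t : ℝ) + 1) n).det := by
  rw [Hsec0_eq_det_hankel_pathWeight, det_hankel_pathWeight,
    ← Fin.prod_univ_eq_prod_range fun i => (i ! : ℝ)]
  congr 2
  refine prod_congr rfl fun i _ => ?_
  exact_mod_cast prod_range_add_one_eq_factorial i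

theorem prod_factorial_mul_prod_odd (m : ℕ) :
    (∏ i ∈ range (2 * m), i !) * ∏ j ∈ range m, (2 * j + 1) =
      (∏ j ∈ range m, (2 * j + 1)!) ^ 2 := by
  induction m with
  | zero => rfl
  | succ m ih =>
    rw [mul_add_one, prod_range_succ, prod_range_succ, prod_range_succ, prod_range_succ, mul_pow,
      ← ih, Nat.factorial_succ (2 * m)]
    ring

theorem prod_Icc_one_sub_one_eq_prod_range {M : Type*} [CommMonoid M] (f : ℕ → M) (hf : f 0 = 1)
    (m : ℕ) : ∏ k ∈ Icc 1 (m - 1), f k = ∏ k ∈ range m, f k := by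
  cases m with
  | zero => rfl
  | succ m =>
    rw [prod_range_eq_mul_Ico f m.succ_pos, hf, one_mul, Nat.add_sub_cancel, Nat.succ_eq_add_one,
      Ico_add_one_right_eq_Icc]

theorem hankel_zero_secant (n : ℕ) :
    Hsec0 (2*n+1) = 0 ∧
    Hsec0 (2*n) = (-1 : ℝ)^n * ∏ k ∈ Finset.Icc 1 (n-1), (Nat.factorial (2*k+1) : ℝ)^4 := by
  refine ⟨by rw [Hsec0_eq_prod_factorial_sq_mul_det, det_jacobiMatrix_two_mul_add_one, mul_zero],
    ?_⟩
  have hfactorials : ((∏ i ∈ range (2 * n), (i ! : ℝ)) * ∏ j ∈ range n, ((2 * j : ℕ) + 1 : ℝ)) ^ 2 =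
      ∏ k ∈ range n, ((2 * k + 1)! : ℝ) ^ 4 := by
    rw [prod_pow, show 4 = 2 * 2 by rfl, pow_mul]
    exact_mod_cast congrArg (· ^ 2) (prod_factorial_mul_prod_odd n)
  rw [Hsec0_eq_prod_factorial_sq_mul_det, det_jacobiMatrix_two_mul, prod_neg, card_range,
    prod_Icc_one_sub_one_eq_prod_range _ (by simp), ← hfactorials, prod_pow]
  ring
end

section
/- Define α_n = Σ_{k=0}^{n} C(n−k, k) · k!. Then α_0 = α_1 = 1, α_2 = 2, and for n ≥ 3, 2α_n = 3α_{n−1} + (n−1)α_{n−2} − (n−1)α_{n−3}. -/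
open Finset

/-- `α n = Σ_{k=0}^{n} C(n-k, k) · k!`. -/
def alphaSeq (n : ℕ) : ℕ :=
  ∑ k ∈ Finset.range (n+1), (n-k).choose k * Nat.factorial k

/-!
Index the terms of `α n` by pairs `(k, m)` with `k + m = n`, the term being `C(m, k) · k!`.
Pascal's rule and the absorption identity `(k+1) C(m+1, k+1) = (m+1) C(m, k)` combine into
`2 C(m+1, k+1) (k+1)! = C(m, k+1) (k+1)! + (k+m+2) C(m, k) k!`, which sums to the first-order
recurrence `2 α (n+2) = α (n+1) + (n+2) α n + 1`. The stated recurrence is the difference of two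
consecutive instances of it.
-/

open Nat

theorem two_mul_choose_succ_succ_mul_factorial (m k : ℕ) :
    2 * ((m + 1).choose (k + 1) * (k + 1)!) =
      m.choose (k + 1) * (k + 1)! + (k + m + 2) * (m.choose k * k !) := by
  rw [factorial_succ]
  linear_combination k ! * (add_one_mul_choose_eq m k).symm + (k + 1) * k ! * choose_succ_succ' m k

theorem alphaSeq_eq_sum_antidiagonal (n : ℕ) :
    alphaSeq n = ∑ p ∈ antidiagonal n, p.2.choose p.1 * p.1 ! :=
  (Nat.sum_antidiagonal_eq_sum_range_succ (fun k m ↦ m.choose k * k !) n).symm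

theorem two_mul_alphaSeq_add_two (n : ℕ) :
    2 * alphaSeq (n + 2) = alphaSeq (n + 1) + (n + 2) * alphaSeq n + 1 := by
  have h_add_two : alphaSeq (n + 2) =
      ∑ p ∈ antidiagonal n, (p.2 + 1).choose (p.1 + 1) * (p.1 + 1)! + 1 := by
    rw [alphaSeq_eq_sum_antidiagonal, Nat.sum_antidiagonal_succ, Nat.sum_antidiagonal_succ']
    simp [add_comm, choose_eq_zero_of_lt]
  have h_add_one : alphaSeq (n + 1) =
      ∑ p ∈ antidiagonal n, p.2.choose (p.1 + 1) * (p.1 + 1)! + 1 := by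
    rw [alphaSeq_eq_sum_antidiagonal, Nat.sum_antidiagonal_succ]
    simp [add_comm]
  have h_term : ∀ p ∈ antidiagonal n, 2 * ((p.2 + 1).choose (p.1 + 1) * (p.1 + 1)!) =
      p.2.choose (p.1 + 1) * (p.1 + 1)! + (n + 2) * (p.2.choose p.1 * p.1 !) := by
    rintro ⟨k, m⟩ hp
    rw [← HasAntidiagonal.mem_antidiagonal.mp hp]
    exact two_mul_choose_succ_succ_mul_factorial m k
  rw [h_add_two, h_add_one, alphaSeq_eq_sum_antidiagonal, mul_add, mul_sum,
    sum_congr rfl h_term, sum_add_distrib, ← mul_sum]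
  ring

theorem alpha_recurrence :
    alphaSeq 0 = 1 ∧ alphaSeq 1 = 1 ∧ alphaSeq 2 = 2 ∧
    ∀ n : ℕ, 3 ≤ n →
      2 * (alphaSeq n : ℤ) =
        3 * alphaSeq (n-1) + (n-1) * alphaSeq (n-2) - (n-1) * alphaSeq (n-3) := by
  refine ⟨by decide, by decide, by decide, fun n hn ↦ ?_⟩
  obtain ⟨j, rfl⟩ : ∃ j, n = j + 3 := ⟨n - 3, by omega⟩
  have hj := congrArg (Nat.cast : ℕ → ℤ) (two_mul_alphaSeq_add_two j)
  have hj' := congrArg (Nat.cast : ℕ → ℤ) (two_mul_alphaSeq_add_two (j + 1))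
  push_cast at hj hj'
  simp only [add_tsub_cancel_right, show j + 3 - 1 = j + 2 by omega,
    show j + 3 - 2 = j + 1 by omega]
  push_cast
  linear_combination hj' - hj
end
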